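/- arXiv:2501.12227 — 3 statements merged into one kernel-verified Lean document; each statement's English description precedes it below -/
import Mathlib

section
/- For the example target distribution q_{X₁X₂Y} (with X₁=(X₁₁,X₁₂) a pair of independent uniform bits, X₂=B uniform on {1,2} independent of X₁, and Y=X_{1B}), every pmf of the form p(x₁,x₂,u₁,u₂,x̃₁,x̃₂,y) = p(x₁)p(x₂) ∏_{j=1,2} p(u_j,x̃_j|x_j) · p(y|u₁,u₂,x̃₁,x̃₂) on finite alphabets whose (X₁,X₂,Y)-marginal equals q(x₁,x₂,y) satisfies I(U₁,X̃₁;X₁) ≥ 2 and I(U₂,X̃₂;X₂) ≥ 1 (in bits). -/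
open scoped BigOperators

noncomputable section

/-- `p` is a probability mass function on the finite type `α`. -/
def IsPMF {α : Type*} [Fintype α] (p : α → ℝ) : Prop :=
  (∀ a, 0 ≤ p a) ∧ ∑ a, p a = 1

/-- `k` is a stochastic kernel from `α` to the finite type `β`. -/
def IsKernel {α β : Type*} [Fintype β] (k : α → β → ℝ) : Prop :=
  ∀ a, (∀ b, 0 ≤ k a b) ∧ ∑ b, k a b = 1

/-- Distribution (pushforward pmf) of the random variable `X` under the pmf `μ`. -/
def rvDist {Ω α : Type*} [Fintype Ω] [DecidableEq α] (μ : Ω → ℝ) (X : Ω → α) : α → ℝ :=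
  fun a => ∑ ω, if X ω = a then μ ω else 0

/-- Shannon entropy in bits of a pmf on a finite type. -/
def entBits {α : Type*} [Fintype α] (p : α → ℝ) : ℝ :=
  (∑ a, Real.negMulLog (p a)) / Real.log 2

/-- Entropy (in bits) of a random variable `X` under the pmf `μ`. -/
def Hb {Ω α : Type*} [Fintype Ω] [Fintype α] [DecidableEq α] (μ : Ω → ℝ) (X : Ω → α) : ℝ :=
  entBits (rvDist μ X)

/-- Conditional entropy (in bits) `H(X | Z)`. -/
def condHb {Ω α γ : Type*} [Fintype Ω] [Fintype α] [Fintype γ] [DecidableEq α] [DecidableEq γ]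
    (μ : Ω → ℝ) (X : Ω → α) (Z : Ω → γ) : ℝ :=
  Hb μ (fun ω => (X ω, Z ω)) - Hb μ Z

/-- Mutual information (in bits) `I(X; Y)`. -/
def Ib {Ω α β : Type*} [Fintype Ω] [Fintype α] [Fintype β] [DecidableEq α] [DecidableEq β]
    (μ : Ω → ℝ) (X : Ω → α) (Y : Ω → β) : ℝ :=
  Hb μ X + Hb μ Y - Hb μ (fun ω => (X ω, Y ω))

/-- Conditional mutual information (in bits) `I(X; Y | Z)`. -/
def condIb {Ω α β γ : Type*} [Fintype Ω] [Fintype α] [Fintype β] [Fintype γ]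
    [DecidableEq α] [DecidableEq β] [DecidableEq γ]
    (μ : Ω → ℝ) (X : Ω → α) (Y : Ω → β) (Z : Ω → γ) : ℝ :=
  Hb μ (fun ω => (X ω, Z ω)) + Hb μ (fun ω => (Y ω, Z ω))
    - Hb μ (fun ω => (X ω, Y ω, Z ω)) - Hb μ Z

/- The example target distribution: `X₁ = (X₁₁, X₁₂)` a pair of independent uniform bits,
`X₂ = B` uniform on `{1, 2}` (encoded as `Bool`, `false ↦ 1`, `true ↦ 2`) independent of
`X₁`, and `Y = X_{1B}` the `B`-th component of `X₁`. -/

/-- Selection of the `B`-th component of `x₁ = (x₁₁, x₁₂)`. -/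
def selB (b : Bool) (a : Bool × Bool) : Bool := if b then a.2 else a.1

/-- The example target pmf `q_{X₁X₂Y}` on `(Bool × Bool) × Bool × Bool`. -/
def qEx : (Bool × Bool) × Bool × Bool → ℝ :=
  fun z => if z.2.2 = selB z.2.1 z.1 then (8 : ℝ)⁻¹ else 0

/- Projections of a 7-tuple sample space `Ω = 𝒳₁ × 𝒳₂ × 𝒰₁ × 𝒰₂ × 𝒳̃₁ × 𝒳̃₂ × 𝒴`. -/
section Proj7
variable {A B C D E F G : Type*}
def pj1 (ω : A × B × C × D × E × F × G) : A := ω.1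
def pj2 (ω : A × B × C × D × E × F × G) : B := ω.2.1
def pj3 (ω : A × B × C × D × E × F × G) : C := ω.2.2.1
def pj4 (ω : A × B × C × D × E × F × G) : D := ω.2.2.2.1
def pj5 (ω : A × B × C × D × E × F × G) : E := ω.2.2.2.2.1
def pj6 (ω : A × B × C × D × E × F × G) : F := ω.2.2.2.2.2.1
def pj7 (ω : A × B × C × D × E × F × G) : G := ω.2.2.2.2.2.2
end Proj7

/-! Under the non-cribbing factorization the two encoders act independently, so whenever
`(x₁, u₁, x̃₁)` and `(x₂, u₂, x̃₂)` are possible, so is `(x₁, x₂, u₁, u₂, x̃₁, x̃₂, y)` for any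
`y` with `p(y | u₁, u₂, x̃₁, x̃₂) > 0`; such a `y` does not depend on `(x₁, x₂)`. Since `Y = X_{1B}`
on the support, the codeword `(u₁, x̃₁)` therefore fixes `x_{1b}` for both values of `b`, i.e. it
determines `X₁`, and `(u₂, x̃₂)` likewise determines `B`. Hence `I(U₁, X̃₁; X₁) = H(X₁) = 2` and
`I(U₂, X̃₂; X₂) = H(B) = 1`. -/

section Distributions

variable {Ω α β : Type*} [Fintype Ω]

lemma IsKernel.exists_ne_zero {k : α → β → ℝ} [Fintype β] (hk : IsKernel k) (a : α) :
    ∃ b, k a b ≠ 0 := by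
  obtain ⟨b, -, hb⟩ := Finset.exists_ne_zero_of_sum_ne_zero ((hk a).2 ▸ one_ne_zero)
  exact ⟨b, hb⟩

lemma eq_zero_of_rvDist_eq_zero [DecidableEq α] {μ : Ω → ℝ} {X : Ω → α} {a : α} {ω : Ω}
    (hμ : ∀ ω, 0 ≤ μ ω) (h : rvDist μ X a = 0) (hX : X ω = a) : μ ω = 0 := by
  have := (Finset.sum_eq_zero_iff_of_nonneg fun ω _ => ?_).mp h ω (Finset.mem_univ ω)
  · simpa [hX] using this
  · split_ifs <;> simp [hμ ω]

lemma exists_of_rvDist_ne_zero [DecidableEq α] {μ : Ω → ℝ} {X : Ω → α} {a : α}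
    (h : rvDist μ X a ≠ 0) : ∃ ω, X ω = a ∧ μ ω ≠ 0 := by
  obtain ⟨ω, -, hω⟩ := Finset.exists_ne_zero_of_sum_ne_zero h
  exact ⟨ω, by_contra fun hX => hω (if_neg hX), fun h0 => hω (by simp [h0])⟩

lemma rvDist_comp [Fintype α] [DecidableEq α] [DecidableEq β] (μ : Ω → ℝ) (X : Ω → α)
    (f : α → β) (b : β) :
    rvDist μ (fun ω => f (X ω)) b = ∑ a, if f a = b then rvDist μ X a else 0 := by
  simp only [rvDist, Finset.ite_sum_zero, ← ite_and]
  rw [Finset.sum_comm]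
  exact Finset.sum_congr rfl fun ω _ => by simp [and_comm, ite_and]

lemma rvDist_congr [DecidableEq α] {μ : Ω → ℝ} {X X' : Ω → α}
    (h : ∀ ω, μ ω ≠ 0 → X ω = X' ω) : rvDist μ X = rvDist μ X' := by
  ext a
  refine Finset.sum_congr rfl fun ω _ => ?_
  by_cases hω : μ ω = 0
  · simp [hω]
  · rw [h ω hω]

lemma entBits_const_inv_card [Fintype α] :
    entBits (fun _ : α => (Fintype.card α : ℝ)⁻¹) = Real.logb 2 (Fintype.card α) := by
  by_cases hα : (Fintype.card α : ℝ) = 0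
  · simp [entBits, hα]
  · simp [entBits, Real.negMulLog, Real.logb, Real.log_inv]
    field_simp

lemma Hb_pair_comp [Fintype α] [Fintype β] [DecidableEq α] [DecidableEq β]
    (μ : Ω → ℝ) (Z : Ω → β) (g : β → α) :
    Hb μ (fun ω => (Z ω, g (Z ω))) = Hb μ Z := by
  unfold Hb entBits
  rw [Fintype.sum_prod_type]
  congr 1
  refine Finset.sum_congr rfl fun b _ => ?_
  simp [rvDist_comp μ Z (fun b => (b, g b)), ite_and, apply_ite Real.negMulLog]

lemma Ib_eq_Hb_of_determined [Fintype α] [Fintype β] [DecidableEq α] [DecidableEq β]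
    [Nonempty α] {μ : Ω → ℝ} {Z : Ω → β} {X : Ω → α}
    (h : ∀ ω ω', μ ω ≠ 0 → μ ω' ≠ 0 → Z ω = Z ω' → X ω = X ω') :
    Ib μ Z X = Hb μ X := by
  classical
  let g (b : β) : α :=
    if hb : ∃ ω, μ ω ≠ 0 ∧ Z ω = b then X hb.choose else Classical.arbitrary α
  have hg : ∀ ω, μ ω ≠ 0 → (Z ω, X ω) = (Z ω, g (Z ω)) := fun ω hω => by
    have hb : ∃ ω', μ ω' ≠ 0 ∧ Z ω' = Z ω := ⟨ω, hω, rfl⟩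
    simp only [g, dif_pos hb]
    rw [h ω _ hω hb.choose_spec.1 hb.choose_spec.2.symm]
  have hpair : Hb μ (fun ω => (Z ω, X ω)) = Hb μ Z := by
    rw [Hb, rvDist_congr hg]
    exact Hb_pair_comp μ Z g
  rw [Ib, hpair, add_sub_cancel_left]

end Distributions

section NonCribbing

variable {X1 X2 U1 U2 Xt1 Xt2 Y : Type*}

def noCribPMF (pX1 : X1 → ℝ) (pX2 : X2 → ℝ) (k1 : X1 → U1 × Xt1 → ℝ) (k2 : X2 → U2 × Xt2 → ℝ)
    (kY : U1 × U2 × Xt1 × Xt2 → Y → ℝ) : X1 × X2 × U1 × U2 × Xt1 × Xt2 × Y → ℝ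
  | (x1, x2, u1, u2, xt1, xt2, y) =>
    pX1 x1 * pX2 x2 * k1 x1 (u1, xt1) * k2 x2 (u2, xt2) * kY (u1, u2, xt1, xt2) y

variable {pX1 : X1 → ℝ} {pX2 : X2 → ℝ} {k1 : X1 → U1 × Xt1 → ℝ} {k2 : X2 → U2 × Xt2 → ℝ}
  {kY : U1 × U2 × Xt1 × Xt2 → Y → ℝ}

lemma noCribPMF_nonneg (hpX1 : ∀ a, 0 ≤ pX1 a) (hpX2 : ∀ b, 0 ≤ pX2 b)
    (hk1 : ∀ a z, 0 ≤ k1 a z) (hk2 : ∀ b w, 0 ≤ k2 b w) (hkY : ∀ v y, 0 ≤ kY v y)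
    (ω : X1 × X2 × U1 × U2 × Xt1 × Xt2 × Y) : 0 ≤ noCribPMF pX1 pX2 k1 k2 kY ω := by
  obtain ⟨x1, x2, u1, u2, xt1, xt2, y⟩ := ω
  exact mul_nonneg (mul_nonneg (mul_nonneg (mul_nonneg (hpX1 x1) (hpX2 x2)) (hk1 _ _))
    (hk2 _ _)) (hkY _ _)

lemma noCribPMF_ne_zero_iff {x1 : X1} {x2 : X2} {u1 : U1} {u2 : U2} {xt1 : Xt1} {xt2 : Xt2}
    {y : Y} :
    noCribPMF pX1 pX2 k1 k2 kY (x1, x2, u1, u2, xt1, xt2, y) ≠ 0 ↔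
      pX1 x1 ≠ 0 ∧ pX2 x2 ≠ 0 ∧ k1 x1 (u1, xt1) ≠ 0 ∧ k2 x2 (u2, xt2) ≠ 0 ∧
        kY (u1, u2, xt1, xt2) y ≠ 0 := by
  simp only [noCribPMF, mul_ne_zero_iff, and_assoc]

lemma eq_of_noCribPMF_common_codewords [Fintype Y] (hkY : IsKernel kY) {f : X1 → X2 → Y}
    (hY : ∀ ω, noCribPMF pX1 pX2 k1 k2 kY ω ≠ 0 → pj7 ω = f (pj1 ω) (pj2 ω))
    {a a' : X1} {b b' : X2} {z : U1 × Xt1} {w : U2 × Xt2}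
    (ha : pX1 a ≠ 0 ∧ k1 a z ≠ 0) (ha' : pX1 a' ≠ 0 ∧ k1 a' z ≠ 0)
    (hb : pX2 b ≠ 0 ∧ k2 b w ≠ 0) (hb' : pX2 b' ≠ 0 ∧ k2 b' w ≠ 0) :
    f a b = f a' b' := by
  obtain ⟨y, hy⟩ := hkY.exists_ne_zero (z.1, w.1, z.2, w.2)
  have hout : ∀ x1 x2, pX1 x1 ≠ 0 ∧ k1 x1 z ≠ 0 → pX2 x2 ≠ 0 ∧ k2 x2 w ≠ 0 → f x1 x2 = y :=
    fun x1 x2 h1 h2 => (hY (x1, x2, z.1, w.1, z.2, w.2, y)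
      (noCribPMF_ne_zero_iff.mpr ⟨h1.1, h2.1, h1.2, h2.2, hy⟩)).symm
  rw [hout a b ha hb, hout a' b' ha' hb']

lemma pj1_eq_of_noCribPMF_ne_zero [Fintype U2] [Fintype Xt2] [Fintype Y] (hk2 : IsKernel k2)
    (hkY : IsKernel kY) {f : X1 → X2 → Y}
    (hY : ∀ ω, noCribPMF pX1 pX2 k1 k2 kY ω ≠ 0 → pj7 ω = f (pj1 ω) (pj2 ω))
    (hpX2 : ∀ b, pX2 b ≠ 0) (hf : ∀ a a', (∀ b, f a b = f a' b) → a = a')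
    {ω ω' : X1 × X2 × U1 × U2 × Xt1 × Xt2 × Y} (hω : noCribPMF pX1 pX2 k1 k2 kY ω ≠ 0)
    (hω' : noCribPMF pX1 pX2 k1 k2 kY ω' ≠ 0) (hz : (pj3 ω, pj5 ω) = (pj3 ω', pj5 ω')) :
    pj1 ω = pj1 ω' := by
  obtain ⟨x1, x2, u1, u2, xt1, xt2, y⟩ := ω
  obtain ⟨x1', x2', u1', u2', xt1', xt2', y'⟩ := ω'
  obtain ⟨rfl, rfl⟩ : u1 = u1' ∧ xt1 = xt1' := Prod.mk.inj hz
  obtain ⟨ha, -, hk, -⟩ := noCribPMF_ne_zero_iff.mp hω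
  obtain ⟨ha', -, hk', -⟩ := noCribPMF_ne_zero_iff.mp hω'
  refine hf _ _ fun b => ?_
  obtain ⟨w, hw⟩ := hk2.exists_ne_zero b
  exact eq_of_noCribPMF_common_codewords hkY hY ⟨ha, hk⟩ ⟨ha', hk'⟩ ⟨hpX2 b, hw⟩ ⟨hpX2 b, hw⟩

lemma pj2_eq_of_noCribPMF_ne_zero [Fintype U1] [Fintype Xt1] [Fintype Y] (hk1 : IsKernel k1)
    (hkY : IsKernel kY) {f : X1 → X2 → Y}
    (hY : ∀ ω, noCribPMF pX1 pX2 k1 k2 kY ω ≠ 0 → pj7 ω = f (pj1 ω) (pj2 ω))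
    {a : X1} (ha : pX1 a ≠ 0) (hf : Function.Injective (f a))
    {ω ω' : X1 × X2 × U1 × U2 × Xt1 × Xt2 × Y} (hω : noCribPMF pX1 pX2 k1 k2 kY ω ≠ 0)
    (hω' : noCribPMF pX1 pX2 k1 k2 kY ω' ≠ 0) (hw : (pj4 ω, pj6 ω) = (pj4 ω', pj6 ω')) :
    pj2 ω = pj2 ω' := by
  obtain ⟨x1, x2, u1, u2, xt1, xt2, y⟩ := ω
  obtain ⟨x1', x2', u1', u2', xt1', xt2', y'⟩ := ω'
  obtain ⟨rfl, rfl⟩ : u2 = u2' ∧ xt2 = xt2' := Prod.mk.inj hw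
  obtain ⟨-, hb, -, hk, -⟩ := noCribPMF_ne_zero_iff.mp hω
  obtain ⟨-, hb', -, hk', -⟩ := noCribPMF_ne_zero_iff.mp hω'
  obtain ⟨z, hz⟩ := hk1.exists_ne_zero a
  exact hf (eq_of_noCribPMF_common_codewords hkY hY ⟨ha, hz⟩ ⟨ha, hz⟩ ⟨hb, hk⟩ ⟨hb', hk'⟩)

end NonCribbing

lemma eq_of_forall_selB_eq {a a' : Bool × Bool} (h : ∀ b, selB b a = selB b a') : a = a' :=
  Prod.ext (h false) (h true)

lemma selB_false_true_injective : Function.Injective fun b => selB b (false, true) := by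
  intro b b'
  cases b <;> cases b' <;> simp [selB]

section TargetDistribution

variable {Ω : Type*} [Fintype Ω] {μ : Ω → ℝ} {X : Ω → (Bool × Bool) × Bool × Bool}

lemma snd_snd_eq_selB_of_rvDist_eq_qEx (hμ : ∀ ω, 0 ≤ μ ω) (hX : rvDist μ X = qEx) {ω : Ω}
    (hω : μ ω ≠ 0) : (X ω).2.2 = selB (X ω).2.1 (X ω).1 := by
  by_contra hne
  exact hω (eq_zero_of_rvDist_eq_zero hμ ((congrFun hX _).trans (if_neg hne)) rfl)

lemma Hb_fst_of_rvDist_eq_qEx (hX : rvDist μ X = qEx) : Hb μ (fun ω => (X ω).1) = 2 := by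
  have hunif : ∀ a, rvDist μ (fun ω => (X ω).1) a = (Fintype.card (Bool × Bool) : ℝ)⁻¹ := by
    intro a
    rw [rvDist_comp μ X, hX]
    obtain ⟨_ | _, _ | _⟩ := a <;> norm_num [Fintype.sum_prod_type, qEx, selB]
  rw [Hb, funext hunif, entBits_const_inv_card]
  norm_num
  rw [show (4 : ℝ) = 2 ^ (2 : ℝ) by norm_num, Real.logb_rpow] <;> norm_num

lemma Hb_snd_of_rvDist_eq_qEx (hX : rvDist μ X = qEx) : Hb μ (fun ω => (X ω).2.1) = 1 := by
  have hunif : ∀ b, rvDist μ (fun ω => (X ω).2.1) b = (Fintype.card Bool : ℝ)⁻¹ := by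
    intro b
    rw [rvDist_comp μ X (fun z => z.2.1), hX]
    cases b <;> norm_num [Fintype.sum_prod_type, qEx, selB]
  rw [Hb, funext hunif, entBits_const_inv_card]
  norm_num

end TargetDistribution

/-- **Proposition 1, converse part.**  For the example target distribution, every pmf with
the non-cribbing factorization `p(x₁)p(x₂) ∏_j p(u_j, x̃_j | x_j) p(y | u₁, u₂, x̃₁, x̃₂)`
whose `(X₁,X₂,Y)`-marginal is the target satisfies `I(U₁, X̃₁; X₁) ≥ 2` and
`I(U₂, X̃₂; X₂) ≥ 1` bits. -/
theorem example_converse_no_crib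
    {U1 U2 Xt1 Xt2 : Type*} [Fintype U1] [Fintype U2] [Fintype Xt1] [Fintype Xt2]
    [DecidableEq U1] [DecidableEq U2] [DecidableEq Xt1] [DecidableEq Xt2]
    (μ : (Bool × Bool) × Bool × U1 × U2 × Xt1 × Xt2 × Bool → ℝ)
    (pX1 : Bool × Bool → ℝ) (pX2 : Bool → ℝ)
    (k1 : Bool × Bool → U1 × Xt1 → ℝ) (k2 : Bool → U2 × Xt2 → ℝ)
    (kY : U1 × U2 × Xt1 × Xt2 → Bool → ℝ)
    (hpX1 : IsPMF pX1) (hpX2 : IsPMF pX2)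
    (hk1 : IsKernel k1) (hk2 : IsKernel k2) (hkY : IsKernel kY)
    (hfac : ∀ x1 x2 u1 u2 xt1 xt2 y,
      μ (x1, x2, u1, u2, xt1, xt2, y) =
        pX1 x1 * pX2 x2 * k1 x1 (u1, xt1) * k2 x2 (u2, xt2) * kY (u1, u2, xt1, xt2) y)
    (hmarg : ∀ z, rvDist μ (fun ω => (pj1 ω, pj2 ω, pj7 ω)) z = qEx z) :
    2 ≤ Ib μ (fun ω => (pj3 ω, pj5 ω)) pj1 ∧
    1 ≤ Ib μ (fun ω => (pj4 ω, pj6 ω)) pj2 := by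
  obtain rfl : μ = noCribPMF pX1 pX2 k1 k2 kY :=
    funext fun ⟨x1, x2, u1, u2, xt1, xt2, y⟩ => hfac x1 x2 u1 u2 xt1 xt2 y
  have hX := funext hmarg
  have hμ := noCribPMF_nonneg hpX1.1 hpX2.1 (fun a => (hk1 a).1) (fun b => (hk2 b).1)
    (fun v => (hkY v).1)
  have hY (ω) (hω) : pj7 ω = selB (pj2 ω) (pj1 ω) :=
    snd_snd_eq_selB_of_rvDist_eq_qEx hμ hX hω
  have hpos (a : Bool × Bool) (b : Bool) : pX1 a ≠ 0 ∧ pX2 b ≠ 0 := by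
    obtain ⟨⟨x1, x2, _⟩, hω, hne⟩ :=
      exists_of_rvDist_ne_zero ((hmarg (a, b, selB b a)).trans_ne (by simp [qEx]))
    simp only [pj1, pj2, pj7, Prod.mk.injEq] at hω
    obtain ⟨rfl, rfl, -⟩ := hω
    exact ⟨(noCribPMF_ne_zero_iff.mp hne).1, (noCribPMF_ne_zero_iff.mp hne).2.1⟩
  refine ⟨?_, ?_⟩
  · rw [Ib_eq_Hb_of_determined fun _ _ => pj1_eq_of_noCribPMF_ne_zero (f := fun a b => selB b a)
      hk2 hkY hY (fun b => (hpos (false, true) b).2) fun _ _ => eq_of_forall_selB_eq]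
    exact (Hb_fst_of_rvDist_eq_qEx hX).ge
  · rw [Ib_eq_Hb_of_determined fun _ _ => pj2_eq_of_noCribPMF_ne_zero (f := fun a b => selB b a)
      hk1 hkY hY (hpos (false, true) false).1 selB_false_true_injective]
    exact (Hb_snd_of_rvDist_eq_qEx hX).ge
end
end

section
/- For the example target distribution q_{X₁X₂Y} (with X₁=(X₁₁,X₁₂) a pair of independent uniform bits, X₂=B uniform on {1,2} independent of X₁, and Y=X_{1B}), every pmf of the form p(x₁,x₂,u₁,u₂,x̃₁,x̃₂,y) = p(x₁)p(x₂) ∏_{j=1,2} p(u_j,x̃_j|x_j) · p(y|u₁,u₂,x̃₁,x̃₂) on finite alphabets whose (X₁,X₂,Y)-marginal equals q(x₁,x₂,y) satisfies H(X₂|U₂,X̃₂) = 0; equivalently, for every pair (u₂,x̃₂) with P(U₂=u₂, X̃₂=x̃₂) > 0, the conditional distribution of X₂ given (U₂,X̃₂)=(u₂,x̃₂) is supported on a single point. -/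
open scoped BigOperators

noncomputable section

lemma rvDist_nonneg' {Ω α : Type*} [Fintype Ω] [DecidableEq α] {μ : Ω → ℝ}
    (hμ : ∀ ω, 0 ≤ μ ω) (X : Ω → α) (a : α) : 0 ≤ rvDist μ X a :=
  Finset.sum_nonneg fun ω _ => by by_cases h : X ω = a <;> simp [h, hμ ω]

lemma rvDist_pos_iff' {Ω α : Type*} [Fintype Ω] [DecidableEq α] {μ : Ω → ℝ}
    (hμ : ∀ ω, 0 ≤ μ ω) (X : Ω → α) (a : α) :
    0 < rvDist μ X a ↔ ∃ ω, X ω = a ∧ 0 < μ ω := by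
  unfold rvDist
  constructor
  · intro h
    by_contra hc
    push_neg at hc
    have hz : ∑ ω, (if X ω = a then μ ω else 0) = 0 := by
      refine Finset.sum_eq_zero fun ω _ => ?_
      by_cases hx : X ω = a
      · simp [hx, le_antisymm (hc ω hx) (hμ ω)]
      · simp [hx]
    rw [hz] at h
    exact lt_irrefl 0 h
  · rintro ⟨ω, hx, hpos⟩
    have h1 : (if X ω = a then μ ω else 0) ≤ ∑ ω', (if X ω' = a then μ ω' else 0) :=
      Finset.single_le_sum (f := fun ω' => if X ω' = a then μ ω' else 0)
        (fun i _ => by by_cases h : X i = a <;> simp [h, hμ i]) (Finset.mem_univ ω)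
    rw [if_pos hx] at h1
    exact lt_of_lt_of_le hpos h1

lemma rvDist_marg' {Ω α γ : Type*} [Fintype Ω] [Fintype α] [DecidableEq α] [DecidableEq γ]
    (μ : Ω → ℝ) (X : Ω → α) (Z : Ω → γ) (z : γ) :
    rvDist μ Z z = ∑ x, rvDist μ (fun ω => (X ω, Z ω)) (x, z) := by
  unfold rvDist
  rw [Finset.sum_comm]
  refine Finset.sum_congr rfl fun ω _ => ?_
  by_cases hz : Z ω = z
  · simp [hz, Prod.ext_iff]
  · simp [hz, Prod.ext_iff]

/-- For the example target distribution, every pmf with the non-cribbing factorization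
`p(x₁)p(x₂) ∏_j p(u_j, x̃_j | x_j) p(y | u₁, u₂, x̃₁, x̃₂)` whose `(X₁,X₂,Y)`-marginal is
the target satisfies `H(X₂ | U₂, X̃₂) = 0`; equivalently, for every `(u₂, x̃₂)` of positive
probability the conditional distribution of `X₂` given `(U₂, X̃₂) = (u₂, x̃₂)` is supported
on a single point. -/
theorem example_X2_determined
    {U1 U2 Xt1 Xt2 : Type*} [Fintype U1] [Fintype U2] [Fintype Xt1] [Fintype Xt2]
    [DecidableEq U1] [DecidableEq U2] [DecidableEq Xt1] [DecidableEq Xt2]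
    (μ : (Bool × Bool) × Bool × U1 × U2 × Xt1 × Xt2 × Bool → ℝ)
    (pX1 : Bool × Bool → ℝ) (pX2 : Bool → ℝ)
    (k1 : Bool × Bool → U1 × Xt1 → ℝ) (k2 : Bool → U2 × Xt2 → ℝ)
    (kY : U1 × U2 × Xt1 × Xt2 → Bool → ℝ)
    (hpX1 : IsPMF pX1) (hpX2 : IsPMF pX2)
    (hk1 : IsKernel k1) (hk2 : IsKernel k2) (hkY : IsKernel kY)
    (hfac : ∀ x1 x2 u1 u2 xt1 xt2 y,
      μ (x1, x2, u1, u2, xt1, xt2, y) =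
        pX1 x1 * pX2 x2 * k1 x1 (u1, xt1) * k2 x2 (u2, xt2) * kY (u1, u2, xt1, xt2) y)
    (hmarg : ∀ z, rvDist μ (fun ω => (pj1 ω, pj2 ω, pj7 ω)) z = qEx z) :
    condHb μ pj2 (fun ω => (pj4 ω, pj6 ω)) = 0 ∧
    ∀ u2 xt2, 0 < rvDist μ (fun ω => (pj4 ω, pj6 ω)) (u2, xt2) →
      ∃ x2 : Bool, ∀ x2' : Bool,
        0 < rvDist μ (fun ω => (pj2 ω, pj4 ω, pj6 ω)) (x2', u2, xt2) → x2' = x2 := by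
  obtain ⟨hpX1n, hpX1s⟩ := hpX1
  obtain ⟨hpX2n, hpX2s⟩ := hpX2
  have hμ : ∀ ω, 0 ≤ μ ω := by
    rintro ⟨x1, x2, u1, u2, xt1, xt2, y⟩
    rw [hfac]
    exact mul_nonneg (mul_nonneg (mul_nonneg (mul_nonneg (hpX1n x1) (hpX2n x2))
      ((hk1 x1).1 (u1, xt1))) ((hk2 x2).1 (u2, xt2))) ((hkY (u1, u2, xt1, xt2)).1 y)
  -- key: at most one x2 compatible with each (u2, xt2)
  have key : ∀ (u2 : U2) (xt2 : Xt2) (x2 x2' : Bool),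
      0 < rvDist μ (fun ω => (pj2 ω, pj4 ω, pj6 ω)) (x2, u2, xt2) →
      0 < rvDist μ (fun ω => (pj2 ω, pj4 ω, pj6 ω)) (x2', u2, xt2) → x2 = x2' := by
    intro u2 xt2 x2 x2' h h'
    by_contra hne
    have hk2pos : ∀ b : Bool, 0 < rvDist μ (fun ω => (pj2 ω, pj4 ω, pj6 ω)) (b, u2, xt2) →
        0 < pX2 b ∧ 0 < k2 b (u2, xt2) := by
      intro b hb
      obtain ⟨ω, hωeq, hωpos⟩ := (rvDist_pos_iff' hμ _ _).1 hb
      obtain ⟨x1, bb, u1, uu2, xt1, xx2, y⟩ := ω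
      simp only [pj2, pj4, pj6, Prod.mk.injEq] at hωeq
      obtain ⟨h1, h2, h3⟩ := hωeq
      rw [hfac, h1, h2, h3] at hωpos
      constructor
      · rcases (hpX2n b).lt_or_eq with hp | hp
        · exact hp
        · rw [← hp] at hωpos; simp at hωpos
      · rcases ((hk2 b).1 (u2, xt2)).lt_or_eq with hp | hp
        · exact hp
        · rw [← hp] at hωpos; simp at hωpos
    have hx2 := hk2pos x2 h
    have hx2' := hk2pos x2' h'
    -- pX1 (false, true) > 0
    have hq : 0 < rvDist μ (fun ω => (pj1 ω, pj2 ω, pj7 ω)) ((false, true), false, false) := by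
      rw [hmarg]; norm_num [qEx, selB]
    have hpX1pos : 0 < pX1 (false, true) := by
      obtain ⟨ω, hωeq, hωpos⟩ := (rvDist_pos_iff' hμ _ _).1 hq
      obtain ⟨x1, bb, u1, uu2, xt1, xx2, y⟩ := ω
      simp only [pj1, pj2, pj7, Prod.mk.injEq] at hωeq
      obtain ⟨h1, h2, h3⟩ := hωeq
      subst h1
      rw [hfac] at hωpos
      rcases (hpX1n (false, true)).lt_or_eq with hp | hp
      · exact hp
      · rw [← hp] at hωpos; simp at hωpos
    have hex1 : ∃ v : U1 × Xt1, 0 < k1 (false, true) v := by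
      by_contra hc
      push_neg at hc
      have hz : ∑ v, k1 (false, true) v = 0 :=
        Finset.sum_eq_zero fun v _ => le_antisymm (hc v) ((hk1 (false, true)).1 v)
      rw [(hk1 (false, true)).2] at hz; norm_num at hz
    obtain ⟨⟨u1, xt1⟩, hu1⟩ := hex1
    have hexY : ∃ y : Bool, 0 < kY (u1, u2, xt1, xt2) y := by
      by_contra hc
      push_neg at hc
      have hz : ∑ y, kY (u1, u2, xt1, xt2) y = 0 :=
        Finset.sum_eq_zero fun y _ => le_antisymm (hc y) ((hkY (u1, u2, xt1, xt2)).1 y)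
      rw [(hkY (u1, u2, xt1, xt2)).2] at hz; norm_num at hz
    obtain ⟨y, hy⟩ := hexY
    have hsel : ∀ b : Bool, 0 < pX2 b → 0 < k2 b (u2, xt2) → y = selB b (false, true) := by
      intro b hb1 hb2
      have hμp : 0 < μ ((false, true), b, u1, u2, xt1, xt2, y) := by
        rw [hfac]
        exact mul_pos (mul_pos (mul_pos (mul_pos hpX1pos hb1) hu1) hb2) hy
      have hd : 0 < rvDist μ (fun ω => (pj1 ω, pj2 ω, pj7 ω)) ((false, true), b, y) :=
        (rvDist_pos_iff' hμ _ _).2 ⟨((false, true), b, u1, u2, xt1, xt2, y), rfl, hμp⟩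
      rw [hmarg] at hd
      by_contra hy'
      have hd' : (0:ℝ) < if y = selB b (false, true) then (8:ℝ)⁻¹ else 0 := hd
      rw [if_neg hy'] at hd'
      exact lt_irrefl 0 hd'
    have e1 := hsel x2 hx2.1 hx2.2
    have e2 := hsel x2' hx2'.1 hx2'.2
    have hsel_id : ∀ b : Bool, selB b (false, true) = b := by decide
    exact hne (by rw [← hsel_id x2, ← hsel_id x2', ← e1, ← e2])
  have part2 : ∀ u2 xt2, 0 < rvDist μ (fun ω => (pj4 ω, pj6 ω)) (u2, xt2) →
      ∃ x2 : Bool, ∀ x2' : Bool,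
        0 < rvDist μ (fun ω => (pj2 ω, pj4 ω, pj6 ω)) (x2', u2, xt2) → x2' = x2 := by
    intro u2 xt2 hpos
    obtain ⟨ω, hωeq, hωpos⟩ := (rvDist_pos_iff' hμ _ _).1 hpos
    refine ⟨pj2 ω, fun x2' hx2' => ?_⟩
    have hω2 : 0 < rvDist μ (fun ω => (pj2 ω, pj4 ω, pj6 ω)) (pj2 ω, u2, xt2) := by
      refine (rvDist_pos_iff' hμ _ _).2 ⟨ω, ?_, hωpos⟩
      simp only [Prod.mk.injEq] at hωeq ⊢
      exact ⟨trivial, hωeq.1, hωeq.2⟩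
    exact key u2 xt2 x2' (pj2 ω) hx2' hω2
  refine ⟨?_, part2⟩
  unfold condHb Hb entBits
  rw [sub_eq_zero]
  congr 1
  have hswap : ∀ (f : Bool × U2 × Xt2 → ℝ), ∑ a, f a = ∑ z : U2 × Xt2, ∑ b : Bool, f (b, z) := by
    intro f
    rw [Fintype.sum_prod_type]
    exact Finset.sum_comm
  rw [hswap]
  refine Finset.sum_congr rfl fun z _ => ?_
  obtain ⟨u2, xt2⟩ := z
  have hsum : rvDist μ (fun ω => (pj4 ω, pj6 ω)) (u2, xt2)
      = ∑ b : Bool, rvDist μ (fun ω => (pj2 ω, pj4 ω, pj6 ω)) (b, (u2, xt2)) :=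
    rvDist_marg' μ pj2 (fun ω => (pj4 ω, pj6 ω)) (u2, xt2)
  have hzero : rvDist μ (fun ω => (pj2 ω, pj4 ω, pj6 ω)) (false, u2, xt2) = 0 ∨
      rvDist μ (fun ω => (pj2 ω, pj4 ω, pj6 ω)) (true, u2, xt2) = 0 := by
    by_contra hc
    push_neg at hc
    have h1 := lt_of_le_of_ne (rvDist_nonneg' hμ _ _) (Ne.symm hc.1)
    have h2 := lt_of_le_of_ne (rvDist_nonneg' hμ _ _) (Ne.symm hc.2)
    exact absurd (key u2 xt2 false true h1 h2) (by simp)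
  rw [Fintype.sum_bool] at hsum
  rw [Fintype.sum_bool]
  rcases hzero with h0 | h0 <;> simp [hsum, h0, Real.negMulLog_zero]
end
end

section
/- For the example target distribution q_{X₁X₂Y} (with X₁=(X₁₁,X₁₂) a pair of independent uniform bits, X₂=B uniform on {1,2} independent of X₁, and Y=X_{1B}), there exist finite sets 𝒰₁, 𝒰₂, 𝒳̃₁, 𝒳̃₂ and a pmf with the cribbing factorization p(x₁,x₂,u₁,u₂,x̃₁,x̃₂,y) = p(x₁)p(x₂)·p(u₂,x̃₂|x₂)·p(u₁,x̃₁|x₁,x̃₂)·p(y|u₁,u₂,x̃₁,x̃₂) whose (X₁,X₂,Y)-marginal equals q(x₁,x₂,y), satisfying (in bits): H(X̃₁) = 1, H(X̃₂) = 1, H(X̃₁,X̃₂) = 2, and the feasibility constraints H(X̃₁) ≥ I(U₁,X̃₁;X₁,X̃₂) − I(U₁;U₂,X̃₂|X̃₁), H(X̃₂) ≥ I(U₂,X̃₂;X₂) − I(U₂;U₁,X̃₁|X̃₂), and H(X̃₁,X̃₂) ≥ I(U₂,X̃₂;X₂) − I(U₂,X̃₂;U₁,X̃₁) + I(U₁,X̃₁;X₁,X̃₂).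 In particular, the choice X̃₂ = X₂ = B, U₂ = B, X̃₁ = X_{1B}, U₁ = X_{1B} works. -/
open scoped BigOperators

noncomputable section

section AuxCrib
set_option synthInstance.maxSize 1000
set_option maxRecDepth 10000

def fB : Bool → Fin 2 := fun b => if b then 1 else 0
def gB : Fin 2 → Bool := fun i => decide (i = 1)

abbrev Ωex := (Bool × Bool) × Bool × Fin 2 × Fin 2 × Fin 2 × Fin 2 × Bool

def cpX1 : Bool × Bool → ℝ := fun _ => 4⁻¹
def cpX2 : Bool → ℝ := fun _ => 2⁻¹
def ck2 : Bool → Fin 2 × Fin 2 → ℝ := fun x2 p => if p = (fB x2, fB x2) then 1 else 0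
def ck1 : (Bool × Bool) × Fin 2 → Fin 2 × Fin 2 → ℝ :=
  fun q p => if p = (fB (selB (gB q.2) q.1), fB (selB (gB q.2) q.1)) then 1 else 0
def ckY : Fin 2 × Fin 2 × Fin 2 × Fin 2 → Bool → ℝ := fun q y => if y = gB q.2.2.1 then 1 else 0

def μex : Ωex → ℝ := fun ω =>
  cpX1 ω.1 * cpX2 ω.2.1 * ck2 ω.2.1 (ω.2.2.2.1, ω.2.2.2.2.2.1) *
    ck1 (ω.1, ω.2.2.2.2.2.1) (ω.2.2.1, ω.2.2.2.2.1) *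
    ckY (ω.2.2.1, ω.2.2.2.1, ω.2.2.2.2.1, ω.2.2.2.2.2.1) ω.2.2.2.2.2.2

def pt (x1 : Bool × Bool) (x2 : Bool) : Ωex :=
  (x1, x2, fB (selB x2 x1), fB x2, fB (selB x2 x1), fB x2, selB x2 x1)

def Cond (ω : Ωex) : Prop :=
  (ω.2.2.2.1, ω.2.2.2.2.2.1) = (fB ω.2.1, fB ω.2.1) ∧
  (ω.2.2.1, ω.2.2.2.2.1) = (fB (selB (gB ω.2.2.2.2.2.1) ω.1), fB (selB (gB ω.2.2.2.2.2.1) ω.1)) ∧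
  ω.2.2.2.2.2.2 = gB ω.2.2.2.2.1

instance (ω : Ωex) : Decidable (Cond ω) := by unfold Cond; infer_instance

lemma cond_iff : ∀ ω : Ωex, Cond ω ↔ ω = pt ω.1 ω.2.1 := by decide

lemma mu_eq (ω : Ωex) : μex ω = if ω = pt ω.1 ω.2.1 then (8:ℝ)⁻¹ else 0 := by
  rw [if_congr (cond_iff ω).symm rfl rfl]
  by_cases h : Cond ω
  · obtain ⟨h1, h2, h3⟩ := h
    rw [if_pos ⟨h1, h2, h3⟩]
    simp only [μex, ck2, ck1, ckY, cpX1, cpX2, if_pos h1, if_pos h2, if_pos h3]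
    norm_num
  · rw [if_neg h]
    simp only [Cond, not_and_or] at h
    simp only [μex, ck2, ck1, ckY, cpX1, cpX2]
    rcases h with h | h | h <;> rw [if_neg h] <;> ring

lemma rvDist_mu {α : Type*} [Fintype α] [DecidableEq α] (X : Ωex → α) (a : α) :
    rvDist μex X a
      = ∑ x1 : Bool × Bool, ∑ x2 : Bool, (if X (pt x1 x2) = a then (8:ℝ)⁻¹ else 0) := by
  unfold rvDist
  have key : ∀ ω : Ωex, (if X ω = a then μex ω else 0)
      = (if ω = pt ω.1 ω.2.1 then (if X ω = a then (8:ℝ)⁻¹ else 0) else 0) := by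
    intro ω; rw [mu_eq]; split_ifs <;> rfl
  rw [Finset.sum_congr rfl (fun ω _ => key ω), Fintype.sum_prod_type]
  refine Finset.sum_congr rfl fun x1 _ => ?_
  rw [Fintype.sum_prod_type]
  refine Finset.sum_congr rfl fun x2 _ => ?_
  have hcond : ∀ r : Fin 2 × Fin 2 × Fin 2 × Fin 2 × Bool,
      ((x1, x2, r) = pt x1 x2) ↔ r = (pt x1 x2).2.2 := by
    intro r
    constructor
    · intro h; exact congrArg (fun z => z.2.2) h
    · intro h; rw [h]; rfl
  simp only [hcond]
  rw [Finset.sum_ite_eq' Finset.univ ((pt x1 x2).2.2)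
    (fun r => if X (x1, x2, r) = a then (8:ℝ)⁻¹ else 0)]
  simp only [Finset.mem_univ, if_true]
  rfl

lemma log2_ne : Real.log 2 ≠ 0 := ne_of_gt (Real.log_pos one_lt_two)

lemma entBits_eq {α : Type*} [Fintype α] (p : α → ℝ) (c : ℝ)
    (h : ∑ a, Real.negMulLog (p a) = c * Real.log 2) : entBits p = c := by
  unfold entBits; rw [h, mul_div_assoc, div_self log2_ne, mul_one]

lemma nml_half : Real.negMulLog ((2:ℝ)⁻¹) = 2⁻¹ * Real.log 2 := by
  simp [Real.negMulLog, Real.log_inv]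

lemma nml_quarter : Real.negMulLog ((4:ℝ)⁻¹) = 4⁻¹ * (2 * Real.log 2) := by
  have : ((4:ℝ)) = 2 ^ 2 := by norm_num
  simp [Real.negMulLog, Real.log_inv, this, Real.log_pow]

lemma nml_eighth : Real.negMulLog ((8:ℝ)⁻¹) = 8⁻¹ * (3 * Real.log 2) := by
  have : ((8:ℝ)) = 2 ^ 3 := by norm_num
  simp [Real.negMulLog, Real.log_inv, this, Real.log_pow]

lemma Hb_eq {α : Type*} [Fintype α] [DecidableEq α] (X : Ωex → α) (p : α → ℝ) (c : ℝ)
    (h1 : ∀ a, (∑ x1 : Bool × Bool, ∑ x2 : Bool,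
        if X (pt x1 x2) = a then (8:ℝ)⁻¹ else 0) = p a)
    (h2 : ∑ a, Real.negMulLog (p a) = c * Real.log 2) :
    Hb μex X = c := by
  unfold Hb
  rw [show rvDist μex X = p from funext fun a => (rvDist_mu X a).trans (h1 a)]
  exact entBits_eq p c h2

end AuxCrib

section AuxCrib2
set_option synthInstance.maxSize 1000
set_option maxRecDepth 10000

lemma hpX1 : IsPMF cpX1 := by
  constructor
  · intro a; norm_num [cpX1]
  · simp [cpX1, Finset.sum_const, Finset.card_univ]
    try norm_num

lemma hpX2 : IsPMF cpX2 := by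
  constructor
  · intro a; norm_num [cpX2]
  · simp [cpX2, Finset.sum_const, Finset.card_univ]
    try norm_num

lemma hk2 : IsKernel ck2 := by
  intro a
  constructor
  · intro b; unfold ck2; split <;> norm_num
  · simp [ck2]

lemma hk1 : IsKernel ck1 := by
  intro a
  constructor
  · intro b; unfold ck1; split <;> norm_num
  · simp [ck1]

lemma hkY : IsKernel ckY := by
  intro a
  constructor
  · intro b; unfold ckY; split <;> norm_num
  · simp [ckY, Fintype.sum_bool]

lemma marg : ∀ z, rvDist μex (fun ω => (pj1 ω, pj2 ω, pj7 ω)) z = qEx z := by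
  intro z
  rw [rvDist_mu]
  rcases z with ⟨⟨a,b⟩,c,d⟩
  fin_cases a <;> fin_cases b <;> fin_cases c <;> fin_cases d <;>
    norm_num [pt, fB, gB, selB, pj1, pj2, pj7, qEx, Fintype.sum_prod_type, Fintype.sum_bool]

lemma H5 : Hb μex pj5 = 1 := by
  refine Hb_eq _ (fun _ => (2:ℝ)⁻¹) 1 ?_ ?_
  · intro a
    fin_cases a <;>
      norm_num [pt, fB, gB, selB, pj5, Fintype.sum_prod_type, Fintype.sum_bool]
  · rw [Fin.sum_univ_two, nml_half]; ring

lemma H6 : Hb μex pj6 = 1 := by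
  refine Hb_eq _ (fun _ => (2:ℝ)⁻¹) 1 ?_ ?_
  · intro a
    fin_cases a <;>
      norm_num [pt, fB, gB, selB, pj6, Fintype.sum_prod_type, Fintype.sum_bool]
  · rw [Fin.sum_univ_two, nml_half]; ring

lemma H2ex : Hb μex pj2 = 1 := by
  refine Hb_eq _ (fun _ => (2:ℝ)⁻¹) 1 ?_ ?_
  · intro a
    fin_cases a <;>
      norm_num [pt, fB, gB, selB, pj2, Fintype.sum_prod_type, Fintype.sum_bool]
  · rw [Fintype.sum_bool, nml_half]; ring

lemma H56 : Hb μex (fun ω => (pj5 ω, pj6 ω)) = 2 := by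
  refine Hb_eq _ (fun _ => (4:ℝ)⁻¹) 2 ?_ ?_
  · intro a
    rcases a with ⟨a1, a2⟩
    fin_cases a1 <;> fin_cases a2 <;>
      norm_num [pt, fB, gB, selB, pj5, pj6, Fintype.sum_prod_type, Fintype.sum_bool]
  · simp [Fintype.sum_prod_type, Fin.sum_univ_two, nml_quarter]
    try ring

lemma H35 : Hb μex (fun ω => (pj3 ω, pj5 ω)) = 1 := by
  refine Hb_eq _ (fun z => if z.1 = z.2 then (2:ℝ)⁻¹ else 0) 1 ?_ ?_
  · intro a
    rcases a with ⟨a1, a2⟩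
    fin_cases a1 <;> fin_cases a2 <;>
      norm_num [pt, fB, gB, selB, pj3, pj5, Fintype.sum_prod_type, Fintype.sum_bool]
  · simp [Fintype.sum_prod_type, Fin.sum_univ_two, nml_half, Real.negMulLog_zero]; ring

lemma H16 : Hb μex (fun ω => (pj1 ω, pj6 ω)) = 3 := by
  refine Hb_eq _ (fun _ => (8:ℝ)⁻¹) 3 ?_ ?_
  · intro a
    rcases a with ⟨⟨a1, a2⟩, a3⟩
    fin_cases a1 <;> fin_cases a2 <;> fin_cases a3 <;>
      norm_num [pt, fB, gB, selB, pj1, pj6, Fintype.sum_prod_type, Fintype.sum_bool]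
  · simp [Fintype.sum_prod_type, Fintype.sum_bool, Fin.sum_univ_two, nml_eighth]
    try ring

lemma H3516 : Hb μex (fun ω => ((pj3 ω, pj5 ω), (pj1 ω, pj6 ω))) = 3 := by
  refine Hb_eq _
    (fun z => if z.1.1 = z.1.2 ∧ z.1.1 = fB (selB (gB z.2.2) z.2.1) then (8:ℝ)⁻¹ else 0) 3 ?_ ?_
  · intro a
    rcases a with ⟨⟨a1, a2⟩, ⟨c1, c2⟩, d⟩
    fin_cases a1 <;> fin_cases a2 <;> fin_cases c1 <;> fin_cases c2 <;> fin_cases d <;>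
      norm_num [pt, fB, gB, selB, pj1, pj3, pj5, pj6, Fintype.sum_prod_type, Fintype.sum_bool]
  · simp [Fintype.sum_prod_type, Fintype.sum_bool, Fin.sum_univ_two, nml_eighth,
      Real.negMulLog_zero, fB, gB, selB]
    ring

lemma H465 : Hb μex (fun ω => ((pj4 ω, pj6 ω), pj5 ω)) = 2 := by
  refine Hb_eq _ (fun z => if z.1.1 = z.1.2 then (4:ℝ)⁻¹ else 0) 2 ?_ ?_
  · intro a
    rcases a with ⟨⟨a1, a2⟩, a3⟩
    fin_cases a1 <;> fin_cases a2 <;> fin_cases a3 <;>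
      norm_num [pt, fB, gB, selB, pj4, pj5, pj6, Fintype.sum_prod_type, Fintype.sum_bool]
  · simp [Fintype.sum_prod_type, Fin.sum_univ_two, nml_quarter, Real.negMulLog_zero]; ring

lemma H3465 : Hb μex (fun ω => (pj3 ω, (pj4 ω, pj6 ω), pj5 ω)) = 2 := by
  refine Hb_eq _ (fun z => if z.2.1.1 = z.2.1.2 ∧ z.1 = z.2.2 then (4:ℝ)⁻¹ else 0) 2 ?_ ?_
  · intro a
    rcases a with ⟨a1, ⟨b1, b2⟩, a3⟩
    fin_cases a1 <;> fin_cases b1 <;> fin_cases b2 <;> fin_cases a3 <;>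
      norm_num [pt, fB, gB, selB, pj3, pj4, pj5, pj6, Fintype.sum_prod_type, Fintype.sum_bool]
  · simp [Fintype.sum_prod_type, Fin.sum_univ_two, nml_quarter, Real.negMulLog_zero]; ring

lemma H46 : Hb μex (fun ω => (pj4 ω, pj6 ω)) = 1 := by
  refine Hb_eq _ (fun z => if z.1 = z.2 then (2:ℝ)⁻¹ else 0) 1 ?_ ?_
  · intro a
    rcases a with ⟨a1, a2⟩
    fin_cases a1 <;> fin_cases a2 <;>
      norm_num [pt, fB, gB, selB, pj4, pj6, Fintype.sum_prod_type, Fintype.sum_bool]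
  · simp [Fintype.sum_prod_type, Fin.sum_univ_two, nml_half, Real.negMulLog_zero]; ring

lemma H462 : Hb μex (fun ω => ((pj4 ω, pj6 ω), pj2 ω)) = 1 := by
  refine Hb_eq _ (fun z => if z.1.1 = fB z.2 ∧ z.1.2 = fB z.2 then (2:ℝ)⁻¹ else 0) 1 ?_ ?_
  · intro a
    rcases a with ⟨⟨a1, a2⟩, a3⟩
    fin_cases a1 <;> fin_cases a2 <;> fin_cases a3 <;>
      norm_num [pt, fB, gB, selB, pj2, pj4, pj6, Fintype.sum_prod_type, Fintype.sum_bool]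
  · simp [Fintype.sum_prod_type, Fintype.sum_bool, Fin.sum_univ_two, nml_half,
      Real.negMulLog_zero, fB]
    ring

lemma H356 : Hb μex (fun ω => ((pj3 ω, pj5 ω), pj6 ω)) = 2 := by
  refine Hb_eq _ (fun z => if z.1.1 = z.1.2 then (4:ℝ)⁻¹ else 0) 2 ?_ ?_
  · intro a
    rcases a with ⟨⟨a1, a2⟩, a3⟩
    fin_cases a1 <;> fin_cases a2 <;> fin_cases a3 <;>
      norm_num [pt, fB, gB, selB, pj3, pj5, pj6, Fintype.sum_prod_type, Fintype.sum_bool]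
  · simp [Fintype.sum_prod_type, Fin.sum_univ_two, nml_quarter, Real.negMulLog_zero]; ring

lemma H4356 : Hb μex (fun ω => (pj4 ω, (pj3 ω, pj5 ω), pj6 ω)) = 2 := by
  refine Hb_eq _ (fun z => if z.2.1.1 = z.2.1.2 ∧ z.1 = z.2.2 then (4:ℝ)⁻¹ else 0) 2 ?_ ?_
  · intro a
    rcases a with ⟨a1, ⟨b1, b2⟩, a3⟩
    fin_cases a1 <;> fin_cases b1 <;> fin_cases b2 <;> fin_cases a3 <;>
      norm_num [pt, fB, gB, selB, pj3, pj4, pj5, pj6, Fintype.sum_prod_type, Fintype.sum_bool]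
  · simp [Fintype.sum_prod_type, Fin.sum_univ_two, nml_quarter, Real.negMulLog_zero]; ring

lemma H4635 : Hb μex (fun ω => ((pj4 ω, pj6 ω), (pj3 ω, pj5 ω))) = 2 := by
  refine Hb_eq _ (fun z => if z.1.1 = z.1.2 ∧ z.2.1 = z.2.2 then (4:ℝ)⁻¹ else 0) 2 ?_ ?_
  · intro a
    rcases a with ⟨⟨a1, a2⟩, ⟨b1, b2⟩⟩
    fin_cases a1 <;> fin_cases a2 <;> fin_cases b1 <;> fin_cases b2 <;>
      norm_num [pt, fB, gB, selB, pj3, pj4, pj5, pj6, Fintype.sum_prod_type, Fintype.sum_bool]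
  · simp [Fintype.sum_prod_type, Fin.sum_univ_two, nml_quarter, Real.negMulLog_zero]; ring

end AuxCrib2

/-- For the example target distribution there exist finite auxiliary alphabets and a pmf
with the **cribbing** factorization
`p(x₁)p(x₂) p(u₂, x̃₂ | x₂) p(u₁, x̃₁ | x₁, x̃₂) p(y | u₁, u₂, x̃₁, x̃₂)` whose
`(X₁,X₂,Y)`-marginal is the target, with `H(X̃₁) = 1`, `H(X̃₂) = 1`, `H(X̃₁, X̃₂) = 2`
bits, satisfying the feasibility constraints of the cribbing region. -/
theorem example_feasibility_with_crib :
    ∃ (nU1 nU2 nXt1 nXt2 : ℕ)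
      (μ : (Bool × Bool) × Bool × Fin nU1 × Fin nU2 × Fin nXt1 × Fin nXt2 × Bool → ℝ)
      (pX1 : Bool × Bool → ℝ) (pX2 : Bool → ℝ)
      (k2 : Bool → Fin nU2 × Fin nXt2 → ℝ)
      (k1 : (Bool × Bool) × Fin nXt2 → Fin nU1 × Fin nXt1 → ℝ)
      (kY : Fin nU1 × Fin nU2 × Fin nXt1 × Fin nXt2 → Bool → ℝ),
      IsPMF pX1 ∧ IsPMF pX2 ∧ IsKernel k2 ∧ IsKernel k1 ∧ IsKernel kY ∧
      -- cribbing factorization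
      (∀ x1 x2 u1 u2 xt1 xt2 y,
        μ (x1, x2, u1, u2, xt1, xt2, y) =
          pX1 x1 * pX2 x2 * k2 x2 (u2, xt2) * k1 (x1, xt2) (u1, xt1) *
            kY (u1, u2, xt1, xt2) y) ∧
      -- the `(X₁, X₂, Y)`-marginal is the example target
      (∀ z, rvDist μ (fun ω => (pj1 ω, pj2 ω, pj7 ω)) z = qEx z) ∧
      -- `H(X̃₁) = 1`, `H(X̃₂) = 1`, `H(X̃₁, X̃₂) = 2` (bits)
      Hb μ pj5 = 1 ∧ Hb μ pj6 = 1 ∧ Hb μ (fun ω => (pj5 ω, pj6 ω)) = 2 ∧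
      -- `H(X̃₁) ≥ I(U₁, X̃₁; X₁, X̃₂) − I(U₁; U₂, X̃₂ | X̃₁)`
      Hb μ pj5 ≥ Ib μ (fun ω => (pj3 ω, pj5 ω)) (fun ω => (pj1 ω, pj6 ω))
        - condIb μ pj3 (fun ω => (pj4 ω, pj6 ω)) pj5 ∧
      -- `H(X̃₂) ≥ I(U₂, X̃₂; X₂) − I(U₂; U₁, X̃₁ | X̃₂)`
      Hb μ pj6 ≥ Ib μ (fun ω => (pj4 ω, pj6 ω)) pj2
        - condIb μ pj4 (fun ω => (pj3 ω, pj5 ω)) pj6 ∧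
      -- `H(X̃₁, X̃₂) ≥ I(U₂, X̃₂; X₂) − I(U₂, X̃₂; U₁, X̃₁) + I(U₁, X̃₁; X₁, X̃₂)`
      Hb μ (fun ω => (pj5 ω, pj6 ω)) ≥
        Ib μ (fun ω => (pj4 ω, pj6 ω)) pj2
          - Ib μ (fun ω => (pj4 ω, pj6 ω)) (fun ω => (pj3 ω, pj5 ω))
          + Ib μ (fun ω => (pj3 ω, pj5 ω)) (fun ω => (pj1 ω, pj6 ω)) := by
  refine ⟨2, 2, 2, 2, μex, cpX1, cpX2, ck2, ck1, ckY,
    hpX1, hpX2, hk2, hk1, hkY,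
    fun x1 x2 u1 u2 xt1 xt2 y => rfl, marg, H5, H6, H56, ?_, ?_, ?_⟩
  · simp only [Ib, condIb]
    rw [H35, H16, H3516, H465, H3465, H5]
    norm_num
  · simp only [Ib, condIb]
    rw [H46, H2ex, H462, H356, H4356, H6]
    norm_num
  · simp only [Ib, condIb]
    rw [H46, H2ex, H462, H35, H4635, H16, H3516, H56]
    norm_num
end
end
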